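/- arXiv:1412.4446 — 2 statements merged into one kernel-verified Lean document; each statement's English description precedes it below -/
import Mathlib

section
/- Let H be a nonempty symmetric hypothesis class over a set X (i.e., for every η ∈ H the pointwise complement x ↦ 1 − η(x) also belongs to H). Given samples x^s = (x^s_1,…,x^s_m) ∈ X^m and x^t = (x^t_1,…,x^t_{m'}) ∈ X^{m'} with m ≥ 1 and m' ≥ 1, the empirical H-divergence satisfies the identity 2 · sup_{η∈H} | (1/m) Σ_{i=1}^m I[η(x^s_i)=1] − (1/m') Σ_{j=1}^{m'} I[η(x^t_j)=1] | = 2 · ( 1 − inf_{η∈H} [ (1/m) Σ_{i=1}^m I[η(x^s_i)=1] + (1/m') Σ_{j=1}^{m'} I[η(x^t_j)=0] ] ), where the supremum and infimum are taken in ℝ. -/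
noncomputable def empAvg {X : Type*} {m : ℕ} (xs : Fin m → X) (η : X → Bool) : ℝ :=
  (1 / (m : ℝ)) * ∑ i, (if η (xs i) = true then (1 : ℝ) else 0)

lemma empAvg_nonneg {X : Type*} {m : ℕ} (xs : Fin m → X) (η : X → Bool) :
    0 ≤ empAvg xs η := by
  unfold empAvg
  apply mul_nonneg (by positivity)
  apply Finset.sum_nonneg
  intro i _
  split <;> norm_num

lemma empAvg_le_one {X : Type*} {m : ℕ} (hm : 1 ≤ m) (xs : Fin m → X) (η : X → Bool) :
    empAvg xs η ≤ 1 := by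
  have hm0 : (0:ℝ) < (m:ℝ) := by exact_mod_cast Nat.lt_of_lt_of_le Nat.zero_lt_one hm
  unfold empAvg
  rw [div_mul_eq_mul_div, one_mul, div_le_one hm0]
  calc (∑ i, (if η (xs i) = true then (1:ℝ) else 0))
      ≤ ∑ _i : Fin m, (1:ℝ) := by
        apply Finset.sum_le_sum; intro i _; split <;> norm_num
    _ = (m:ℝ) := by simp

lemma empAvg_compl {X : Type*} {m : ℕ} (hm : 1 ≤ m) (xs : Fin m → X) (η : X → Bool) :
    empAvg xs (fun x => !(η x)) = 1 - empAvg xs η := by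
  have hm0 : (m:ℝ) ≠ 0 := Nat.cast_ne_zero.mpr (by omega)
  unfold empAvg
  have h : ∀ i : Fin m, (if (!(η (xs i))) = true then (1:ℝ) else 0)
      = 1 - (if η (xs i) = true then (1:ℝ) else 0) := by
    intro i; cases η (xs i) <;> simp
  simp only [h, Finset.sum_sub_distrib, Finset.sum_const, Finset.card_univ,
    Fintype.card_fin, nsmul_eq_mul, mul_one]
  field_simp

lemma empAvg_false {X : Type*} {m : ℕ} (hm : 1 ≤ m) (xs : Fin m → X) (η : X → Bool) :
    (1 / (m : ℝ)) * ∑ i, (if η (xs i) = false then (1 : ℝ) else 0) = 1 - empAvg xs η := by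
  rw [← empAvg_compl hm xs η]
  unfold empAvg
  congr 1
  apply Finset.sum_congr rfl
  intro i _
  cases hb : η (xs i) <;> simp [hb]

/-- For a nonempty symmetric hypothesis class `H`, the empirical
`H`-divergence (defined via a supremum of absolute differences) equals the
expression `2 (1 - inf [...])` of Equation (1) of the paper. -/
theorem empirical_H_divergence_eq
    {X : Type*} (H : Set (X → Bool)) (hne : H.Nonempty)
    (hsym : ∀ η ∈ H, (fun x => !(η x)) ∈ H)
    {m m' : ℕ} (hm : 1 ≤ m) (hm' : 1 ≤ m')
    (xs : Fin m → X) (xt : Fin m' → X) :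
    2 * sSup ((fun η : X → Bool =>
        |(1 / (m : ℝ)) * ∑ i, (if η (xs i) = true then (1 : ℝ) else 0)
          - (1 / (m' : ℝ)) * ∑ j, (if η (xt j) = true then (1 : ℝ) else 0)|) '' H)
      = 2 * (1 - sInf ((fun η : X → Bool =>
        (1 / (m : ℝ)) * ∑ i, (if η (xs i) = true then (1 : ℝ) else 0)
          + (1 / (m' : ℝ)) * ∑ j, (if η (xt j) = false then (1 : ℝ) else 0)) '' H)) := by
  show 2 * sSup ((fun η : X → Bool => |empAvg xs η - empAvg xt η|) '' H)
      = 2 * (1 - sInf ((fun η : X → Bool =>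
          empAvg xs η + (1 / (m' : ℝ)) * ∑ j, (if η (xt j) = false then (1 : ℝ) else 0)) '' H))
  have hfun : (fun η : X → Bool =>
      empAvg xs η + (1 / (m' : ℝ)) * ∑ j, (if η (xt j) = false then (1 : ℝ) else 0))
      = fun η : X → Bool => 1 - (empAvg xt η - empAvg xs η) := by
    funext η
    rw [empAvg_false hm' xt η]
    ring
  rw [hfun]
  -- Let S be the set of differences
  set S : Set ℝ := (fun η : X → Bool => empAvg xt η - empAvg xs η) '' H with hS
  have hSne : S.Nonempty := hne.image _
  have hSbdd : BddAbove S := by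
    refine ⟨1, ?_⟩
    rintro r ⟨η, hη, rfl⟩
    have := empAvg_le_one hm' xt η
    have := empAvg_nonneg xs η
    dsimp only
    linarith
  -- The abs-image set
  set T : Set ℝ := (fun η : X → Bool => |empAvg xs η - empAvg xt η|) '' H with hT
  have hTne : T.Nonempty := hne.image _
  have hTbdd : BddAbove T := by
    refine ⟨1, ?_⟩
    rintro r ⟨η, hη, rfl⟩
    have h1 := empAvg_le_one hm xs η
    have h2 := empAvg_nonneg xs η
    have h3 := empAvg_le_one hm' xt η
    have h4 := empAvg_nonneg xt η
    dsimp only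
    rw [abs_le]
    constructor <;> linarith
  -- sSup T = sSup S
  have hsup : sSup T = sSup S := by
    apply le_antisymm
    · apply csSup_le hTne
      rintro r ⟨η, hη, rfl⟩
      dsimp only
      rcases le_total (empAvg xs η) (empAvg xt η) with h | h
      · rw [abs_of_nonpos (by linarith)]
        exact le_csSup hSbdd ⟨η, hη, by ring⟩
      · rw [abs_of_nonneg (by linarith)]
        have hmem : empAvg xt (fun x => !(η x)) - empAvg xs (fun x => !(η x)) ∈ S :=
          ⟨(fun x => !(η x)), hsym η hη, rfl⟩
        rw [empAvg_compl hm' xt η, empAvg_compl hm xs η] at hmem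
        have : (1 - empAvg xt η) - (1 - empAvg xs η) = empAvg xs η - empAvg xt η := by ring
        rw [this] at hmem
        exact le_csSup hSbdd hmem
    · apply csSup_le hSne
      rintro r ⟨η, hη, rfl⟩
      dsimp only
      calc empAvg xt η - empAvg xs η ≤ |empAvg xs η - empAvg xt η| := by
            rw [abs_sub_comm]; exact le_abs_self _
        _ ≤ sSup T := le_csSup hTbdd ⟨η, hη, rfl⟩
  rw [hsup]
  -- Now: sSup S = 1 - sInf ((1 - ·) '' ...)
  congr 1
  have himg : ((fun η : X → Bool => 1 - (empAvg xt η - empAvg xs η)) '' H)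
      = (fun r => 1 - r) '' S := by
    rw [hS, Set.image_image]
  rw [himg]
  have hbddbelow : BddBelow ((fun r => 1 - r) '' S) := by
    obtain ⟨b, hb⟩ := hSbdd
    refine ⟨1 - b, ?_⟩
    rintro r ⟨s, hs, rfl⟩
    have := hb hs
    dsimp only
    linarith
  have hIne : ((fun r => 1 - r) '' S).Nonempty := hSne.image _
  apply le_antisymm
  · -- sSup S ≤ 1 - sInf
    apply csSup_le hSne
    intro s hs
    have : sInf ((fun r => 1 - r) '' S) ≤ 1 - s := csInf_le hbddbelow ⟨s, hs, rfl⟩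
    linarith
  · -- 1 - sInf ≤ sSup S
    have : sSup S ≥ sSup S := le_refl _
    have h1 : 1 - sSup S ≤ sInf ((fun r => 1 - r) '' S) := by
      apply le_csInf hIne
      rintro r ⟨s, hs, rfl⟩
      have := le_csSup hSbdd hs
      dsimp only
      linarith
    linarith
end

section
/- Let H be a nonempty symmetric hypothesis class over a set X, and let x^s ∈ X^m and x^t ∈ X^m be two samples of the same size m ≥ 1. Define the optimal balanced discrimination error ε = inf_{η∈H} (1/2) [ (1/m) Σ_{i=1}^m I[η(x^s_i)=1] + (1/m) Σ_{j=1}^m I[η(x^t_j)=0] ]. Then the empirical H-divergence equals the Proxy A-distance: 2 · sup_{η∈H} | (1/m) Σ_i I[η(x^s_i)=1] − (1/m) Σ_j I[η(x^t_j)=1] | = 2 (1 − 2ε). -/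
/-- For a nonempty symmetric hypothesis class `H` and two samples of
the same size `m`, the empirical `H`-divergence equals the Proxy A-distance
`2(1 - 2ε)`, where `ε` is the optimal balanced error of discriminating source
(labeled 1) from target (labeled 0) examples. -/
theorem empirical_H_divergence_eq_proxy_A_distance
    {X : Type*} (H : Set (X → Bool)) (hne : H.Nonempty)
    (hsym : ∀ η ∈ H, (fun x => !(η x)) ∈ H)
    {m : ℕ} (hm : 1 ≤ m)
    (xs : Fin m → X) (xt : Fin m → X)
    (ε : ℝ)
    (hε : ε = sInf ((fun η : X → Bool =>
        (1 / 2 : ℝ) * ((1 / (m : ℝ)) * ∑ i, (if η (xs i) = true then (1 : ℝ) else 0)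
          + (1 / (m : ℝ)) * ∑ j, (if η (xt j) = false then (1 : ℝ) else 0))) '' H)) :
    2 * sSup ((fun η : X → Bool =>
        |(1 / (m : ℝ)) * ∑ i, (if η (xs i) = true then (1 : ℝ) else 0)
          - (1 / (m : ℝ)) * ∑ j, (if η (xt j) = true then (1 : ℝ) else 0)|) '' H)
      = 2 * (1 - 2 * ε) := by
  have hm0 : (0:ℝ) < (m:ℝ) := by exact_mod_cast Nat.lt_of_lt_of_le Nat.zero_lt_one hm
  set A : (X → Bool) → ℝ := fun η => (1 / (m : ℝ)) * ∑ i, (if η (xs i) = true then (1 : ℝ) else 0) with hA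
  set B : (X → Bool) → ℝ := fun η => (1 / (m : ℝ)) * ∑ j, (if η (xt j) = true then (1 : ℝ) else 0) with hB
  -- sum of false-indicators
  have hfalse : ∀ η : X → Bool,
      (1 / (m : ℝ)) * ∑ j, (if η (xt j) = false then (1 : ℝ) else 0) = 1 - B η := by
    intro η
    have h1 : ∑ j, (if η (xt j) = false then (1:ℝ) else 0)
        = ∑ j, ((1:ℝ) - (if η (xt j) = true then (1:ℝ) else 0)) := by
      apply Finset.sum_congr rfl
      intro j _
      cases η (xt j) <;> simp
    rw [h1, Finset.sum_sub_distrib, Finset.sum_const, Finset.card_univ, Fintype.card_fin]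
    simp only [hB, nsmul_eq_mul, mul_one]
    field_simp
  -- complements
  have hAc : ∀ η : X → Bool, A (fun x => !(η x)) = 1 - A η := by
    intro η
    have h1 : ∑ i, (if (!(η (xs i))) = true then (1:ℝ) else 0)
        = ∑ i, ((1:ℝ) - (if η (xs i) = true then (1:ℝ) else 0)) := by
      apply Finset.sum_congr rfl
      intro i _
      cases η (xs i) <;> simp
    simp only [hA, h1, Finset.sum_sub_distrib, Finset.sum_const, Finset.card_univ,
      Fintype.card_fin, nsmul_eq_mul, mul_one]
    field_simp
  have hBc : ∀ η : X → Bool, B (fun x => !(η x)) = 1 - B η := by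
    intro η
    have h1 : ∑ j, (if (!(η (xt j))) = true then (1:ℝ) else 0)
        = ∑ j, ((1:ℝ) - (if η (xt j) = true then (1:ℝ) else 0)) := by
      apply Finset.sum_congr rfl
      intro j _
      cases η (xt j) <;> simp
    simp only [hB, h1, Finset.sum_sub_distrib, Finset.sum_const, Finset.card_univ,
      Fintype.card_fin, nsmul_eq_mul, mul_one]
    field_simp
  -- bounds
  have hA01 : ∀ η : X → Bool, 0 ≤ A η ∧ A η ≤ 1 := by
    intro η
    constructor
    · apply mul_nonneg (by positivity)
      apply Finset.sum_nonneg; intro i _; split <;> norm_num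
    · have hs : ∑ i, (if η (xs i) = true then (1:ℝ) else 0) ≤ (m:ℝ) := by
        calc ∑ i, (if η (xs i) = true then (1:ℝ) else 0) ≤ ∑ _i : Fin m, (1:ℝ) := by
              apply Finset.sum_le_sum; intro i _; split <;> norm_num
          _ = (m:ℝ) := by simp
      calc A η ≤ (1/(m:ℝ)) * (m:ℝ) := by
            apply mul_le_mul_of_nonneg_left hs (by positivity)
        _ = 1 := by field_simp
  have hB01 : ∀ η : X → Bool, 0 ≤ B η ∧ B η ≤ 1 := by
    intro η
    constructor
    · apply mul_nonneg (by positivity)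
      apply Finset.sum_nonneg; intro j _; split <;> norm_num
    · have hs : ∑ j, (if η (xt j) = true then (1:ℝ) else 0) ≤ (m:ℝ) := by
        calc ∑ j, (if η (xt j) = true then (1:ℝ) else 0) ≤ ∑ _j : Fin m, (1:ℝ) := by
              apply Finset.sum_le_sum; intro j _; split <;> norm_num
          _ = (m:ℝ) := by simp
      calc B η ≤ (1/(m:ℝ)) * (m:ℝ) := by
            apply mul_le_mul_of_nonneg_left hs (by positivity)
        _ = 1 := by field_simp
  -- rewrite ε
  have hε' : ε = sInf ((fun η : X → Bool => (1/2 : ℝ) * (1 + (A η - B η))) '' H) := by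
    rw [hε]
    congr 1
    apply Set.image_congr
    intro η _
    rw [hfalse η]
    ring
  -- the sup set
  set S : Set ℝ := (fun η : X → Bool =>
        |(1 / (m : ℝ)) * ∑ i, (if η (xs i) = true then (1 : ℝ) else 0)
          - (1 / (m : ℝ)) * ∑ j, (if η (xt j) = true then (1 : ℝ) else 0)|) '' H with hS
  have hSeq : S = (fun η : X → Bool => |A η - B η|) '' H := rfl
  have hSne : S.Nonempty := hne.image _
  have hSbdd : BddAbove S := by
    refine ⟨1, ?_⟩
    rintro y ⟨η, hη, rfl⟩
    have h1 := hA01 η; have h2 := hB01 η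
    rw [abs_le]
    constructor <;> simp only [hA, hB] at * <;> nlinarith [h1.1, h1.2, h2.1, h2.2]
  -- ε set bounds
  have hEne : ((fun η : X → Bool => (1/2 : ℝ) * (1 + (A η - B η))) '' H).Nonempty := hne.image _
  have hEbdd : BddBelow ((fun η : X → Bool => (1/2 : ℝ) * (1 + (A η - B η))) '' H) := by
    refine ⟨0, ?_⟩
    rintro y ⟨η, hη, rfl⟩
    have h1 := hA01 η; have h2 := hB01 η
    nlinarith [h1.1, h2.2]
  have hεle : ∀ η ∈ H, ε ≤ (1/2 : ℝ) * (1 + (A η - B η)) := by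
    intro η hη
    rw [hε']
    exact csInf_le hEbdd ⟨η, hη, rfl⟩
  suffices h : sSup S = 1 - 2 * ε by rw [h]
  apply le_antisymm
  · apply csSup_le hSne
    rintro y ⟨η, hη, rfl⟩
    have h1 := hεle η hη
    have h2 := hεle _ (hsym η hη)
    rw [hAc η, hBc η] at h2
    rw [abs_le]
    constructor <;> simp only [hA, hB] at * <;> linarith
  · have hkey : (1 - sSup S) / 2 ≤ ε := by
      rw [hε']
      apply le_csInf hEne
      rintro y ⟨η, hη, rfl⟩
      have hmem : |A (fun x => !(η x)) - B (fun x => !(η x))| ≤ sSup S := by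
        apply le_csSup hSbdd
        exact ⟨_, hsym η hη, rfl⟩
      rw [hAc η, hBc η] at hmem
      have : B η - A η ≤ |1 - A η - (1 - B η)| := by
        rw [show (1:ℝ) - A η - (1 - B η) = B η - A η by ring]
        exact le_abs_self _
      linarith
    linarith
end
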